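/- arXiv:1004.5188 — 2 statements merged into one kernel-verified Lean document; each statement's English description precedes it below -/
import Mathlib

section
/- For x = 2, the generalized Pi-function limit equals π: lim_{i→∞} 4^{(i+1)/2} sqrt(2 − h_i) = π, where h_0 = 0 and h_{i+1} = sqrt(2 + h_i). -/
/-! The recursion generates Mathlib's `Real.sqrtTwoAddSeries 0`, and `2 ^ (i + 1) * √(2 - h i)` is
the half-perimeter of the regular `2 ^ (i + 2)`-gon inscribed in the unit circle. Archimedes'
bounds `π - 4⁻ⁱ < 2 ^ (i + 1) * √(2 - h i) < π` squeeze it to `π`. -/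

open Real Filter Topology

theorem eq_sqrtTwoAddSeries_of_rec {h : ℕ → ℝ} (h0 : h 0 = 0)
    (hrec : ∀ i, h (i + 1) = √(2 + h i)) (i : ℕ) : h i = sqrtTwoAddSeries 0 i := by
  induction i with
  | zero => simpa using h0
  | succ n ih => rw [hrec, ih, sqrtTwoAddSeries]

theorem tendsto_two_pow_mul_sqrt_two_sub_sqrtTwoAddSeries :
    Tendsto (fun n : ℕ => 2 ^ (n + 1) * √(2 - sqrtTwoAddSeries 0 n)) atTop (𝓝 π) := by
  have hlower : Tendsto (fun n : ℕ => π - 1 / 4 ^ n) atTop (𝓝 π) := by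
    have h4 : Tendsto (fun n : ℕ => (1 / 4 : ℝ) ^ n) atTop (𝓝 0) :=
      tendsto_pow_atTop_nhds_zero_of_lt_one (by norm_num) (by norm_num)
    simpa only [one_div_pow, sub_zero] using tendsto_const_nhds.sub h4
  refine tendsto_of_tendsto_of_tendsto_of_le_of_le hlower tendsto_const_nhds (fun n => ?_)
    (fun n => (pi_gt_sqrtTwoAddSeries n).le)
  linarith [pi_lt_sqrtTwoAddSeries n]

theorem stmt_15 (h : ℕ → ℝ) (h0 : h 0 = 0)
    (hrec : ∀ i, h (i + 1) = Real.sqrt (2 + h i)) :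
    Filter.Tendsto (fun i => (2 : ℝ) ^ (i + 1) * Real.sqrt (2 - h i))
      Filter.atTop (nhds Real.pi) := by
  simpa only [eq_sqrtTwoAddSeries_of_rec h0 hrec] using
    tendsto_two_pow_mul_sqrt_two_sub_sqrtTwoAddSeries
end

section
/- For x > 1, the sequence Π_i(x)² = (2x)^{i+1}(x − h_i(x)) is bounded above, where h_0 = 0 and h_{i+1} = sqrt(x(x−1) + h_i). -/
/-!
With `e i = x - h i`, squaring the recursion gives `e (i+1) * (x + h (i+1)) = e i`, and
`x + h (i+1) ≥ x` makes `e i ≤ x ^ (1 - i)`. Hence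
`Π_{i+1}² = Π_i² * 2x / (x + h (i+1)) = Π_i² * (1 + e (i+1) / (x + h (i+1)))`, a product of
factors `1 + O(x⁻¹ ^ i)`, which stays bounded since the geometric series converges.
-/

open Finset Real

theorem le_mul_prod_one_add_of_le_mul_one_add {a c : ℕ → ℝ} (hc : ∀ n, 0 ≤ 1 + c n)
    (ha : ∀ n, a (n + 1) ≤ a n * (1 + c n)) (n : ℕ) :
    a n ≤ a 0 * ∏ i ∈ range n, (1 + c i) := by
  induction n with
  | zero => simp
  | succ n ih =>
    rw [prod_range_succ, ← mul_assoc]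
    exact (ha n).trans (mul_le_mul_of_nonneg_right ih (hc n))

noncomputable def nestedSqrt (x : ℝ) : ℕ → ℝ
  | 0 => 0
  | i + 1 => √(x * (x - 1) + nestedSqrt x i)

variable {x : ℝ}

theorem nestedSqrt_nonneg (x : ℝ) : ∀ i, 0 ≤ nestedSqrt x i
  | 0 => le_rfl
  | _ + 1 => sqrt_nonneg _

theorem nestedSqrt_le (hx : 0 ≤ x) : ∀ i, nestedSqrt x i ≤ x
  | 0 => hx
  | i + 1 => by
    have := nestedSqrt_le hx i
    exact sqrt_le_iff.mpr ⟨hx, by nlinarith⟩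

theorem sub_nestedSqrt_succ_mul_add (hx : 1 ≤ x) (i : ℕ) :
    (x - nestedSqrt x (i + 1)) * (x + nestedSqrt x (i + 1)) = x - nestedSqrt x i := by
  have hsq : nestedSqrt x (i + 1) ^ 2 = x * (x - 1) + nestedSqrt x i :=
    sq_sqrt (by nlinarith [nestedSqrt_nonneg x i])
  linear_combination -hsq

theorem sub_nestedSqrt_mul_pow_le (hx : 1 ≤ x) : ∀ i, (x - nestedSqrt x i) * x ^ i ≤ x
  | 0 => by simp [nestedSqrt]
  | i + 1 => by
    have ih := sub_nestedSqrt_mul_pow_le hx i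
    have he : 0 ≤ x - nestedSqrt x (i + 1) := sub_nonneg.mpr (nestedSqrt_le (by linarith) _)
    calc (x - nestedSqrt x (i + 1)) * x ^ (i + 1)
        = (x - nestedSqrt x (i + 1)) * x * x ^ i := by ring
      _ ≤ (x - nestedSqrt x (i + 1)) * (x + nestedSqrt x (i + 1)) * x ^ i := by
        gcongr
        linarith [nestedSqrt_nonneg x (i + 1)]
      _ ≤ x := by rwa [sub_nestedSqrt_succ_mul_add hx]

theorem sub_nestedSqrt_succ_le_inv_pow (hx : 1 ≤ x) (i : ℕ) :
    x - nestedSqrt x (i + 1) ≤ x⁻¹ ^ i := by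
  have hx0 : 0 < x := by linarith
  have h := sub_nestedSqrt_mul_pow_le hx (i + 1)
  rw [pow_succ, ← mul_assoc] at h
  rw [inv_pow, ← one_div, le_div_iff₀ (by positivity)]
  exact le_of_mul_le_mul_right (by linarith) hx0

theorem two_mul_pow_mul_sub_nestedSqrt_succ_le (hx : 1 ≤ x) (i : ℕ) :
    (2 * x) ^ (i + 2) * (x - nestedSqrt x (i + 1)) ≤
      (2 * x) ^ (i + 1) * (x - nestedSqrt x i) * (1 + x⁻¹ ^ i) := by
  have hs : 0 ≤ nestedSqrt x (i + 1) := nestedSqrt_nonneg x _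
  have he : 0 ≤ x - nestedSqrt x (i + 1) := sub_nonneg.mpr (nestedSqrt_le (by linarith) _)
  have hdecay : x - nestedSqrt x (i + 1) ≤ x⁻¹ ^ i * (x + nestedSqrt x (i + 1)) :=
    (sub_nestedSqrt_succ_le_inv_pow hx i).trans
      (le_mul_of_one_le_right (by positivity) (by linarith))
  calc (2 * x) ^ (i + 2) * (x - nestedSqrt x (i + 1))
      = (2 * x) ^ (i + 1) * (2 * x * (x - nestedSqrt x (i + 1))) := by ring
    _ ≤ (2 * x) ^ (i + 1) * ((x - nestedSqrt x (i + 1)) * (x + nestedSqrt x (i + 1)) *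
          (1 + x⁻¹ ^ i)) := by
        gcongr (2 * x) ^ (i + 1) * ?_
        nlinarith [mul_le_mul_of_nonneg_left hdecay he]
    _ = _ := by rw [sub_nestedSqrt_succ_mul_add hx i, mul_assoc]

theorem stmt_18 (x : ℝ) (hx : 1 < x) (h : ℕ → ℝ) (h0 : h 0 = 0)
    (hrec : ∀ i, h (i + 1) = Real.sqrt (x * (x - 1) + h i)) :
    ∃ C : ℝ, ∀ i, (2 * x) ^ (i + 1) * (x - h i) ≤ C := by
  have hh : h = nestedSqrt x := funext fun i => by
    induction i with
    | zero => exact h0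
    | succ i ih => rw [hrec, ih, nestedSqrt]
  subst hh
  have hr0 : 0 < x⁻¹ := by positivity
  have hr1 : x⁻¹ < 1 := inv_lt_one_of_one_lt₀ hx
  refine ⟨2 * x * x * exp (1 / (1 - x⁻¹)), fun i => ?_⟩
  calc (2 * x) ^ (i + 1) * (x - nestedSqrt x i)
      ≤ 2 * x * x * ∏ j ∈ range i, (1 + x⁻¹ ^ j) := by
        simpa [nestedSqrt] using le_mul_prod_one_add_of_le_mul_one_add
          (a := fun i => (2 * x) ^ (i + 1) * (x - nestedSqrt x i))
          (fun j => by positivity) (two_mul_pow_mul_sub_nestedSqrt_succ_le hx.le) i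
    _ ≤ 2 * x * x * exp (∑ j ∈ range i, x⁻¹ ^ j) := by
        gcongr 2 * x * x * ?_
        exact prod_one_add_le_exp_sum _ fun j => by positivity
    _ ≤ 2 * x * x * exp (1 / (1 - x⁻¹)) := by
        gcongr 2 * x * x * exp ?_
        have hgeom := geom_sum_Ico_le_of_lt_one (m := 0) (n := i) hr0.le hr1
        rwa [← range_eq_Ico, pow_zero] at hgeom
end
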